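/- For any two rooted binary trees S and T with the same number n of vertices, the chain distance satisfies C(S,T) ≥ |L_S − L_T|, where L_Y denotes the number of maximal left chains of a tree Y. -/
import Mathlib


/-- Rooted binary trees with vertices labeled by `α`: each vertex has an optional
left child and an optional right child; `nil` denotes the absent (empty) tree. -/
inductive BT (α : Type) : Type
  | nil : BT α
  | node : BT α → α → BT α → BT α

namespace BT

variable {α : Type}

/-- The number of vertices of a tree. -/
def size : BT α → ℕ
  | nil => 0
  | node l _ r => size l + size r + 1

/-- The in-order (infix) traversal sequence of the labels of a tree:
left subtree first, then the root, then the right subtree. -/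
def inorder : BT α → List α
  | nil => []
  | node l x r => inorder l ++ x :: inorder r

/-- The number of vertices of the tree having a (non-null) right child. -/
def rightChildCount : BT α → ℕ
  | nil => 0
  | node l _ nil => rightChildCount l
  | node l _ (node rl y rr) => rightChildCount l + rightChildCount (node rl y rr) + 1

/-- The number of vertices of the tree having a (non-null) left child. -/
def leftChildCount : BT α → ℕ
  | nil => 0
  | node nil _ r => leftChildCount r
  | node (node ll y lr) _ r => leftChildCount (node ll y lr) + leftChildCount r + 1

/-- `L T`: the number of maximal left chains of `T`.  A left chain is a sequence of
vertices each linked to the next by a left-child pointer (a single vertex is a chain);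
a maximal left chain is one not contained in any other left chain.  Each maximal left
chain is uniquely determined by its topmost vertex, which is either the root of the
tree or a right child of some vertex; moreover the maximal left chain headed by the
root of a nonempty left subtree `l` merges with its parent, which yields the
recursion below. -/
def L : BT α → ℕ
  | nil => 0
  | node nil _ r => 1 + L r
  | node (node ll y lr) _ r => L (node ll y lr) + L r

/-- `R T`: the number of maximal right chains of `T` (mirror image of `L`). -/
def R : BT α → ℕ
  | nil => 0
  | node l _ nil => R l + 1
  | node l _ (node rl y rr) => R l + R (node rl y rr)

/-- The complete left chain on `n` vertices: the tree in which all `n` vertices are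
linked by left-child pointers. -/
def leftChain : ℕ → BT Unit
  | 0 => nil
  | n + 1 => node (leftChain n) () nil

/-- The complete right chain on `n` vertices: the tree in which all `n` vertices are
linked by right-child pointers. -/
def rightChain : ℕ → BT Unit
  | 0 => nil
  | n + 1 => node nil () (rightChain n)

/-- `SpliceL A w U V lv` captures the local effect of the direct chain rotation
`rot([u-v], w)` for a **left** chain `[u-v]`: here `U` is the subtree rooted at `u`
(`u` being the right child of `w`), `A` is the left subtree of `w` and `w` is its
label, `[u-v]` is the left chain going from `u` down (along left-child pointers) to
`v` inside `U`, `lv` is the former left subtree of `v`, and `V` is the tree replacing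
the subtree `node A w U` rooted at `w`: the vertex `u` takes the place of `w`, `w`
becomes the left child of `v`, and the former left subtree `lv` of `v` (if any)
becomes the right subtree of `w`.  The chain `[u-v]` is maximal iff `lv = nil`. -/
inductive SpliceL (A : BT α) (w : α) : BT α → BT α → BT α → Prop
  | base (lv rv : BT α) (v : α) :
      SpliceL A w (node lv v rv) (node (node A w lv) v rv) lv
  | step {lu lu' lv : BT α} (c : α) (ru : BT α) :
      SpliceL A w lu lu' lv → SpliceL A w (node lu c ru) (node lu' c ru) lv

/-- `SpliceR A w U V rv`: mirror image of `SpliceL`, i.e. the local effect of the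
direct chain rotation `rot([u-v], w)` for a **right** chain `[u-v]`: `U` is the
subtree rooted at `u` (`u` being the left child of `w`), `A` is the right subtree of
`w`, `[u-v]` is the right chain from `u` down to `v` inside `U`, `rv` is the former
right subtree of `v`, and `V` replaces the subtree `node U w A` rooted at `w`: `u`
takes the place of `w`, `w` becomes the right child of `v`, and the former right
subtree `rv` of `v` (if any) becomes the left subtree of `w`.
The chain `[u-v]` is maximal iff `rv = nil`. -/
inductive SpliceR (A : BT α) (w : α) : BT α → BT α → BT α → Prop
  | base (lv rv : BT α) (v : α) :
      SpliceR A w (node lv v rv) (node lv v (node rv w A)) rv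
  | step {ru ru' rv : BT α} (lu : BT α) (c : α) :
      SpliceR A w ru ru' rv → SpliceR A w (node lu c ru) (node lu c ru') rv

/-- `Ctx Y Y' W W'`: the tree `Y'` is obtained from `Y` by replacing one occurrence
of the subtree `W`, rooted at some vertex of `Y` (or `Y` itself), by the tree `W'`. -/
inductive Ctx : BT α → BT α → BT α → BT α → Prop
  | refl (W W' : BT α) : Ctx W W' W W'
  | left {l l' W W' : BT α} (x : α) (r : BT α) :
      Ctx l l' W W' → Ctx (node l x r) (node l' x r) W W'
  | right {r r' W W' : BT α} (l : BT α) (x : α) :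
      Ctx r r' W W' → Ctx (node l x r) (node l x r') W W'

/-- `Y'` is obtained from `Y` by one **direct** chain rotation `rot([u-v], w)`,
performed either on a left chain or (symmetrically) on a right chain, at an arbitrary
vertex `w` of `Y`. -/
def DirectRot (Y Y' : BT α) : Prop :=
  (∃ A w U V lv, SpliceL A w U V lv ∧ Ctx Y Y' (node A w U) V) ∨
  (∃ A w U V rv, SpliceR A w U V rv ∧ Ctx Y Y' (node U w A) V)

/-- `IChainL A w B X X'` captures the data of the inverse chain rotation
`rot(w, [u-v])` for a **left** chain `[u-v]`: `X` is the subtree rooted at `u`,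
`[u-v]` is the left chain from `u` down to `v` inside `X`, and the vertex `w` (with
label `w`, left subtree `A` and right subtree `B`) is the left child of `v`; `X'` is
`X` with the left child `w` of `v` replaced by `B` (the former right subtree of `w`
becomes the left subtree of `v`).  The rotation replaces the subtree `X` by
`node A w X'`: `w` takes the place of `u` and `u` becomes the right child of `w`. -/
inductive IChainL (A : BT α) (w : α) (B : BT α) : BT α → BT α → Prop
  | base (v : α) (rv : BT α) :
      IChainL A w B (node (node A w B) v rv) (node B v rv)
  | step {lu lu' : BT α} (c : α) (ru : BT α) :
      IChainL A w B lu lu' → IChainL A w B (node lu c ru) (node lu' c ru)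

/-- `IChainR B w A X X'`: mirror image of `IChainL`, for the inverse chain rotation
`rot(w, [u-v])` on a **right** chain `[u-v]`: `X` is the subtree rooted at `u`, the
vertex `w` (with left subtree `B` and right subtree `A`) is the right child of `v`;
`X'` is `X` with the right child `w` of `v` replaced by `B`.  The rotation replaces
`X` by `node X' w A`: `w` takes the place of `u` and `u` becomes the left child
of `w`. -/
inductive IChainR (B : BT α) (w : α) (A : BT α) : BT α → BT α → Prop
  | base (v : α) (lv : BT α) :
      IChainR B w A (node lv v (node B w A)) (node lv v B)
  | step {ru ru' : BT α} (lu : BT α) (c : α) :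
      IChainR B w A ru ru' → IChainR B w A (node lu c ru) (node lu c ru')

/-- `Y'` is obtained from `Y` by one **inverse** chain rotation `rot(w, [u-v])`,
performed either on a left chain or (symmetrically) on a right chain, anywhere
in `Y`. -/
def InvRot (Y Y' : BT α) : Prop :=
  (∃ A w B X X', IChainL A w B X X' ∧ Ctx Y Y' X (node A w X')) ∨
  (∃ B w A X X', IChainR B w A X X' ∧ Ctx Y Y' X (node X' w A))

/-- One chain rotation (c-rotation), direct or inverse. -/
def CStep (Y Y' : BT α) : Prop := DirectRot Y Y' ∨ InvRot Y Y'

/-- `ReachIn k S T`: `S` can be transformed into `T` by a sequence of exactly `k`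
chain rotations (each direct or inverse). -/
def ReachIn : ℕ → BT α → BT α → Prop
  | 0 => fun S T => S = T
  | k + 1 => fun S T => ∃ Y, CStep S Y ∧ ReachIn k Y T

/-- `DReachIn k S T`: `S` can be transformed into `T` by a sequence of exactly `k`
**direct** chain rotations. -/
def DReachIn : ℕ → BT α → BT α → Prop
  | 0 => fun S T => S = T
  | k + 1 => fun S T => ∃ Y, DirectRot S Y ∧ DReachIn k Y T

/-- The chain distance `C(S,T)`: the minimum number of chain rotations (direct or
inverse) needed to transform `S` into `T`. -/
noncomputable def chainDist (S T : BT α) : ℕ := sInf {k | ReachIn k S T}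

/-! ### Auxiliary lemmas -/

def isNil : BT α → ℕ
  | nil => 1
  | node _ _ _ => 0

lemma spliceL_size {A : BT α} {w : α} {U V lv : BT α} (h : SpliceL A w U V lv) :
    V.size = (node A w U).size := by
  induction h with
  | base lv rv v => simp [size]; ring
  | step c ru _ ih => simp only [size] at ih ⊢; omega

lemma spliceR_size {A : BT α} {w : α} {U V rv : BT α} (h : SpliceR A w U V rv) :
    V.size = (node U w A).size := by
  induction h with
  | base lv rv v => simp [size]; ring
  | step lu c _ ih => simp only [size] at ih ⊢; omega

lemma spliceL_V_ne_nil {A : BT α} {w : α} {U V lv : BT α} (h : SpliceL A w U V lv) :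
    V ≠ nil := by cases h <;> simp

lemma spliceR_V_ne_nil {A : BT α} {w : α} {U V rv : BT α} (h : SpliceR A w U V rv) :
    V ≠ nil := by cases h <;> simp

lemma spliceL_U_shape {A : BT α} {w : α} {U V lv : BT α} (h : SpliceL A w U V lv) :
    ∃ a b c, U = node a b c := by cases h <;> exact ⟨_, _, _, rfl⟩

lemma spliceL_V_shape {A : BT α} {w : α} {U V lv : BT α} (h : SpliceL A w U V lv) :
    ∃ a b c, V = node a b c := by cases h <;> exact ⟨_, _, _, rfl⟩

lemma spliceR_U_shape {A : BT α} {w : α} {U V rv : BT α} (h : SpliceR A w U V rv) :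
    ∃ a b c, U = node a b c := by cases h <;> exact ⟨_, _, _, rfl⟩

lemma spliceR_V_shape {A : BT α} {w : α} {U V rv : BT α} (h : SpliceR A w U V rv) :
    ∃ a b c, V = node a b c := by cases h <;> exact ⟨_, _, _, rfl⟩

lemma L_node_ne_nil {l : BT α} (x : α) (r : BT α) (hl : l ≠ nil) :
    L (node l x r) = L l + L r := by
  cases l with
  | nil => exact absurd rfl hl
  | node a b c => rfl

lemma spliceL_L {A : BT α} {w : α} {U V lv : BT α} (h : SpliceL A w U V lv) :
    L V + isNil lv = L (node A w U) := by
  induction h with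
  | base lv rv v =>
    cases A <;> cases lv <;> simp [L, isNil] <;> omega
  | step c ru _ ih =>
    obtain ⟨a1, b1, c1, hlu⟩ := spliceL_U_shape (by assumption)
    obtain ⟨a2, b2, c2, hlu'⟩ := spliceL_V_shape (by assumption)
    subst hlu; subst hlu'
    cases A <;> simp only [L, isNil] at ih ⊢ <;> omega

lemma spliceR_L {A : BT α} {w : α} {U V rv : BT α} (h : SpliceR A w U V rv) :
    L (node U w A) + isNil rv = L V := by
  induction h with
  | base lv rv v =>
    cases lv <;> cases rv <;> simp [L, isNil] <;> omega
  | step lu c _ ih =>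
    obtain ⟨a1, b1, c1, hru⟩ := spliceR_U_shape (by assumption)
    obtain ⟨a2, b2, c2, hru'⟩ := spliceR_V_shape (by assumption)
    subst hru; subst hru'
    cases lu <;> simp only [L, isNil] at ih ⊢ <;> omega

lemma ctx_L {Y Y' W W' : BT α} (h : Ctx Y Y' W W') :
    W ≠ nil → W' ≠ nil → Y ≠ nil ∧ Y' ≠ nil ∧ (Y.L : ℤ) - Y'.L = W.L - W'.L := by
  induction h with
  | refl W W' => intro hW hW'; exact ⟨hW, hW', rfl⟩
  | left x r _ ih =>
    intro hW hW'
    obtain ⟨h1, h2, h3⟩ := ih hW hW'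
    refine ⟨by simp, by simp, ?_⟩
    rw [L_node_ne_nil x r h1, L_node_ne_nil x r h2]
    push_cast; linarith
  | right l x _ ih =>
    intro hW hW'
    obtain ⟨h1, h2, h3⟩ := ih hW hW'
    refine ⟨by simp, by simp, ?_⟩
    cases l <;> simp [L] <;> push_cast <;> linarith

lemma ctx_size {Y Y' W W' : BT α} (h : Ctx Y Y' W W') :
    Y.size + W'.size = Y'.size + W.size := by
  induction h with
  | refl W W' => omega
  | left x r _ ih => simp [size]; omega
  | right l x _ ih => simp [size]; omega

lemma ctx_symm {Y Y' W W' : BT α} (h : Ctx Y Y' W W') : Ctx Y' Y W' W := by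
  induction h with
  | refl W W' => exact Ctx.refl W' W
  | left x r _ ih => exact Ctx.left x r ih
  | right l x _ ih => exact Ctx.right l x ih

lemma spliceL_iChainL {A : BT α} {w : α} {U V lv : BT α} (h : SpliceL A w U V lv) :
    IChainL A w lv V U := by
  induction h with
  | base lv rv v => exact IChainL.base v rv
  | step c ru _ ih => exact IChainL.step c ru ih

lemma iChainL_spliceL {A : BT α} {w : α} {B X X' : BT α} (h : IChainL A w B X X') :
    SpliceL A w X' X B := by
  induction h with
  | base v rv => exact SpliceL.base B rv v
  | step c ru _ ih => exact SpliceL.step c ru ih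

lemma spliceR_iChainR {A : BT α} {w : α} {U V rv : BT α} (h : SpliceR A w U V rv) :
    IChainR rv w A V U := by
  induction h with
  | base lv rv v => exact IChainR.base v lv
  | step lu c _ ih => exact IChainR.step lu c ih

lemma iChainR_spliceR {B : BT α} {w : α} {A X X' : BT α} (h : IChainR B w A X X') :
    SpliceR A w X' X B := by
  induction h with
  | base v lv => exact SpliceR.base lv B v
  | step lu c _ ih => exact SpliceR.step lu c ih

lemma invRot_directRot {Y Y' : BT α} (h : InvRot Y Y') : DirectRot Y' Y := by
  rcases h with ⟨A, w, B, X, X', hc, hctx⟩ | ⟨B, w, A, X, X', hc, hctx⟩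
  · exact Or.inl ⟨A, w, X', X, B, iChainL_spliceL hc, ctx_symm hctx⟩
  · exact Or.inr ⟨A, w, X', X, B, iChainR_spliceR hc, ctx_symm hctx⟩

lemma directRot_invRot {Y Y' : BT α} (h : DirectRot Y Y') : InvRot Y' Y := by
  rcases h with ⟨A, w, U, V, lv, hc, hctx⟩ | ⟨A, w, U, V, rv, hc, hctx⟩
  · exact Or.inl ⟨A, w, lv, V, U, spliceL_iChainL hc, ctx_symm hctx⟩
  · exact Or.inr ⟨rv, w, A, V, U, spliceR_iChainR hc, ctx_symm hctx⟩

lemma cstep_symm {Y Y' : BT α} (h : CStep Y Y') : CStep Y' Y := by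
  rcases h with h | h
  · exact Or.inr (directRot_invRot h)
  · exact Or.inl (invRot_directRot h)

lemma directRot_L {Y Y' : BT α} (h : DirectRot Y Y') : |(Y.L : ℤ) - Y'.L| ≤ 1 := by
  rcases h with ⟨A, w, U, V, lv, hc, hctx⟩ | ⟨A, w, U, V, rv, hc, hctx⟩
  · obtain ⟨-, -, h3⟩ := ctx_L hctx (by simp) (spliceL_V_ne_nil hc)
    have := spliceL_L hc
    rw [h3, abs_sub_le_iff]
    cases lv <;> simp [isNil] at this <;> constructor <;> push_cast <;> omega
  · obtain ⟨-, -, h3⟩ := ctx_L hctx (by simp) (spliceR_V_ne_nil hc)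
    have := spliceR_L hc
    rw [h3, abs_sub_le_iff]
    cases rv <;> simp [isNil] at this <;> constructor <;> push_cast <;> omega

lemma cstep_L {Y Y' : BT α} (h : CStep Y Y') : |(Y.L : ℤ) - Y'.L| ≤ 1 := by
  rcases h with h | h
  · exact directRot_L h
  · rw [abs_sub_comm]; exact directRot_L (invRot_directRot h)

lemma reachIn_L {k : ℕ} : ∀ {S T : BT α}, ReachIn k S T → |(S.L : ℤ) - T.L| ≤ k := by
  induction k with
  | zero => intro S T h; simp [ReachIn] at h; subst h; simp
  | succ k ih =>
    rintro S T ⟨Y, hSY, hYT⟩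
    calc |(S.L : ℤ) - T.L| ≤ |(S.L : ℤ) - Y.L| + |(Y.L : ℤ) - T.L| := abs_sub_le _ _ _
    _ ≤ 1 + k := add_le_add (cstep_L hSY) (ih hYT)
    _ = (k + 1 : ℕ) := by push_cast; ring

lemma reachIn_snoc {k : ℕ} : ∀ {S Y T : BT α}, ReachIn k S Y → CStep Y T →
    ReachIn (k + 1) S T := by
  induction k with
  | zero =>
    intro S Y T h hc
    have h' : S = Y := h
    subst h'
    exact ⟨T, hc, rfl⟩
  | succ k ih =>
    rintro S Y T ⟨Z, hSZ, hZY⟩ hc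
    exact ⟨Z, hSZ, ih hZY hc⟩

lemma reachIn_symm {k : ℕ} : ∀ {S T : BT α}, ReachIn k S T → ReachIn k T S := by
  induction k with
  | zero => intro S T h; exact h.symm
  | succ k ih =>
    rintro S T ⟨Y, hSY, hYT⟩
    exact reachIn_snoc (ih hYT) (cstep_symm hSY)

lemma reachIn_trans {j : ℕ} : ∀ {k : ℕ} {S Y T : BT α}, ReachIn j S Y → ReachIn k Y T →
    ReachIn (j + k) S T := by
  induction j with
  | zero => intro k S Y T h h'; simp [ReachIn] at h; subst h; simpa using h'
  | succ j ih =>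
    rintro k S Y T ⟨Z, hSZ, hZY⟩ h'
    have e : j + 1 + k = (j + k) + 1 := by omega
    rw [e]
    exact ⟨Z, hSZ, ih hZY h'⟩

lemma exists_spliceL_nil (A : BT α) (w : α) :
    ∀ (U : BT α), U ≠ nil → ∃ V, SpliceL A w U V nil := by
  intro U
  induction U with
  | nil => intro h; exact absurd rfl h
  | node lu c ru ihl ihr =>
    intro _
    cases lu with
    | nil => exact ⟨_, SpliceL.base nil ru c⟩
    | node a b d =>
      obtain ⟨V, hV⟩ := ihl (by simp)
      exact ⟨node V c ru, SpliceL.step c ru hV⟩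

lemma directRot_left {l l' : BT α} (x : α) (r : BT α) (h : DirectRot l l') :
    DirectRot (node l x r) (node l' x r) := by
  rcases h with ⟨A, w, U, V, lv, hc, hctx⟩ | ⟨A, w, U, V, rv, hc, hctx⟩
  · exact Or.inl ⟨A, w, U, V, lv, hc, Ctx.left x r hctx⟩
  · exact Or.inr ⟨A, w, U, V, rv, hc, Ctx.left x r hctx⟩

lemma L_pos : ∀ {T : BT α}, T ≠ nil → 1 ≤ L T := by
  intro T
  induction T with
  | nil => intro h; exact absurd rfl h
  | node l x r ihl ihr =>
    intro _
    cases l with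
    | nil => simp [L]
    | node a b c => have := ihl (by simp); simp [L]; omega

lemma exists_descend : ∀ (T : BT α), 2 ≤ L T →
    ∃ T', DirectRot T T' ∧ T'.size = T.size ∧ L T' + 1 = L T := by
  intro T
  induction T with
  | nil => intro h; simp [L] at h
  | node l x r ihl ihr =>
    intro hL
    cases r with
    | node rl y rr =>
      obtain ⟨V, hV⟩ := exists_spliceL_nil l x (node rl y rr) (by simp)
      refine ⟨V, Or.inl ⟨l, x, node rl y rr, V, nil, hV, Ctx.refl _ _⟩, spliceL_size hV, ?_⟩
      have := spliceL_L hV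
      simpa [isNil] using this
    | nil =>
      cases l with
      | nil => simp [L] at hL
      | node a b c =>
        have hL' : 2 ≤ L (node a b c) := by simpa [L] using hL
        obtain ⟨l', hrot, hsize, hLl⟩ := ihl hL'
        have hl'ne : l' ≠ nil := by
          intro h; subst h
          simp [size] at hsize
        cases l' with
        | nil => exact absurd rfl hl'ne
        | node p q s =>
          refine ⟨node (node p q s) x nil, directRot_left x nil hrot, ?_, ?_⟩
          · simp [size] at hsize ⊢; omega
          · simp only [L] at hLl ⊢; omega

lemma L_eq_zero : ∀ {T : BT α}, L T = 0 → T = nil := by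
  intro T h
  by_contra hne
  have := L_pos hne
  omega

lemma L_one_leftChain : ∀ (T : BT Unit), L T = 1 → T = leftChain T.size := by
  intro T
  induction T with
  | nil => intro h; simp [L] at h
  | node l x r ihl ihr =>
    intro h
    cases r with
    | node rl y rr =>
      exfalso
      have hr : 1 ≤ L (node rl y rr) := L_pos (by simp)
      cases l with
      | nil => simp [L] at h; omega
      | node a b c =>
        have hl : 1 ≤ L (node a b c) := L_pos (by simp)
        simp [L] at h
        omega
    | nil =>
      cases l with
      | nil =>
        cases x
        simp [size, leftChain]
      | node a b c =>
        have hl : L (node a b c) = 1 := by simpa [L] using h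
        have hrec := ihl hl
        cases x
        have hsz : (node (node a b c) () nil).size = (node a b c).size + 1 := by
          simp [size]
        rw [hsz, leftChain, ← hrec]

lemma reach_leftChain_aux : ∀ (m : ℕ) (T : BT Unit), L T ≤ m →
    ∃ k, ReachIn k T (leftChain T.size) := by
  intro m
  induction m with
  | zero =>
    intro T h
    have : T = nil := L_eq_zero (by omega)
    subst this
    exact ⟨0, rfl⟩
  | succ m ih =>
    intro T h
    rcases Nat.lt_or_ge (L T) (m + 1) with h' | h'
    · exact ih T (by omega)
    · have hLT : L T = m + 1 := by omega
      rcases Nat.lt_or_ge (L T) 2 with h2 | h2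
      · interval_cases hL : L T
        · exact ⟨0, by rw [L_eq_zero hL]; rfl⟩
        · exact ⟨0, by rw [← L_one_leftChain T hL]; rfl⟩
      · obtain ⟨T', hrot, hsize, hL⟩ := exists_descend T h2
        obtain ⟨k, hk⟩ := ih T' (by omega)
        refine ⟨k + 1, T', Or.inl hrot, ?_⟩
        rwa [← hsize]

lemma reach_exists (S T : BT Unit) (hsz : S.size = T.size) : ∃ k, ReachIn k S T := by
  obtain ⟨k1, hk1⟩ := reach_leftChain_aux (L S) S le_rfl
  obtain ⟨k2, hk2⟩ := reach_leftChain_aux (L T) T le_rfl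
  rw [hsz] at hk1
  exact ⟨k1 + k2, reachIn_trans hk1 (reachIn_symm hk2)⟩

end BT

open BT

/-- for any two rooted binary trees `S` and `T` with the same number `n`
of vertices, `C(S,T) ≥ |L_S − L_T|`. -/
theorem chainDist_ge_L_diff (S T : BT Unit) (n : ℕ) (hS : S.size = n) (hT : T.size = n) :
    |(S.L : ℤ) - (T.L : ℤ)| ≤ (chainDist S T : ℤ) := by
  have hsz : S.size = T.size := by rw [hS, hT]
  obtain ⟨k, hk⟩ := reach_exists S T hsz
  have hne : Set.Nonempty {k | ReachIn k S T} := ⟨k, hk⟩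
  have hmem := Nat.sInf_mem hne
  simp only [Set.mem_setOf_eq] at hmem
  exact reachIn_L hmem
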